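/- arXiv:2210.01421 — 2 statements merged into one kernel-verified Lean document; each statement's English description precedes it below -/
import Mathlib

section
/- Singular value sufficient condition for NSP: Suppose T ≥ m+n, S ⊆ {0,…,T−1} with |S^c| ≥ m+n, and √|S| · σ_max([X_S; U_S]) < c · σ_min([X_{S^c}; U_{S^c}]). Then for every nonzero matrix M = [A, B] ∈ ℝ^{n×(n+m)}, ‖M [X_S; U_S]‖_{2,col} < c · ‖M [X_{S^c}; U_{S^c}]‖_{2,col}. -/
/-!
Applied row by row, the extremal characterisation of `σ_max` and `σ_min` sandwiches
`∑_{t ∈ I} ‖(M V)_t‖²` between `‖M‖_F² σ_min(V_I)²` and `‖M‖_F² σ_max(V_I)²`.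
Cauchy–Schwarz (`(∑ a_t)² ≤ |I| ∑ a_t²`) and `∑ a_t² ≤ (∑ a_t)²` for `a_t ≥ 0` transfer
this to the column-sum norm, and squaring the hypothesis finishes the comparison.
-/

/-- Euclidean (`ℓ2`) norm of a finitely indexed real vector. -/
noncomputable def nrm2 {ι : Type*} [Fintype ι] (v : ι → ℝ) : ℝ :=
  Real.sqrt (∑ j, v j ^ 2)

/-- Largest singular value of the submatrix of `V` formed by the columns in `I`:
`sup` over unit vectors `w` of the Euclidean norm of `(wᵀ V)` restricted to `I`. -/
noncomputable def sMaxOn {ι κ : Type*} [Fintype ι] [Fintype κ]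
    (V : Matrix ι κ ℝ) (I : Finset κ) : ℝ :=
  ⨆ w : {w : ι → ℝ // ∑ i, w i ^ 2 = 1},
    Real.sqrt (∑ t ∈ I, (Matrix.vecMul w.1 V t) ^ 2)

/-- Smallest singular value of the submatrix of `V` formed by the columns in `I`. -/
noncomputable def sMinOn {ι κ : Type*} [Fintype ι] [Fintype κ]
    (V : Matrix ι κ ℝ) (I : Finset κ) : ℝ :=
  ⨅ w : {w : ι → ℝ // ∑ i, w i ^ 2 = 1},
    Real.sqrt (∑ t ∈ I, (Matrix.vecMul w.1 V t) ^ 2)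

open Matrix Finset

lemma sum_sq_pos_of_ne_zero {ι : Type*} [Fintype ι] {w : ι → ℝ} (hw : w ≠ 0) :
    0 < ∑ i, w i ^ 2 := by
  obtain ⟨i, hi⟩ := Function.ne_iff.mp hw
  exact sum_pos' (fun j _ => sq_nonneg (w j)) ⟨i, mem_univ i, sq_pos_of_ne_zero hi⟩

lemma sum_sum_sq_pos_of_ne_zero {ρ ι : Type*} [Fintype ρ] [Fintype ι] {M : Matrix ρ ι ℝ}
    (hM : M ≠ 0) : 0 < ∑ r, ∑ i, M r i ^ 2 := by
  obtain ⟨r, hr⟩ := Function.ne_iff.mp hM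
  exact sum_pos' (fun _ _ => sum_nonneg fun _ _ => sq_nonneg _)
    ⟨r, mem_univ r, sum_sq_pos_of_ne_zero hr⟩

section SingularValues

variable {ι κ : Type*} [Fintype ι] (V : Matrix ι κ ℝ) (I : Finset κ)

lemma bddAbove_range_sqrt_sum_sq_vecMul :
    BddAbove (Set.range fun w : {w : ι → ℝ // ∑ i, w i ^ 2 = 1} =>
      √(∑ t ∈ I, (w.1 ᵥ* V) t ^ 2)) := by
  refine ⟨√(∑ t ∈ I, ∑ i, V i t ^ 2), ?_⟩
  rintro _ ⟨w, rfl⟩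
  refine Real.sqrt_le_sqrt (sum_le_sum fun t _ => ?_)
  calc (w.1 ᵥ* V) t ^ 2 = (∑ i, w.1 i * V i t) ^ 2 := rfl
    _ ≤ (∑ i, w.1 i ^ 2) * ∑ i, V i t ^ 2 := sum_mul_sq_le_sq_mul_sq _ _ _
    _ = ∑ i, V i t ^ 2 := by rw [w.2, one_mul]

lemma sum_sq_vecMul_smul (a : ℝ) (w : ι → ℝ) :
    ∑ t ∈ I, ((a • w) ᵥ* V) t ^ 2 = a ^ 2 * ∑ t ∈ I, (w ᵥ* V) t ^ 2 := by
  simp only [smul_vecMul, Pi.smul_apply, smul_eq_mul, mul_pow, mul_sum]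

lemma exists_unit_sum_sq_vecMul_eq {w : ι → ℝ} (hw : w ≠ 0) :
    ∃ u : {u : ι → ℝ // ∑ i, u i ^ 2 = 1},
      ∑ t ∈ I, (w ᵥ* V) t ^ 2 = (∑ i, w i ^ 2) * √(∑ t ∈ I, (u.1 ᵥ* V) t ^ 2) ^ 2 := by
  set s := ∑ i, w i ^ 2
  have hs : 0 < s := sum_sq_pos_of_ne_zero hw
  have hinv : (√s)⁻¹ ^ 2 = s⁻¹ := by rw [inv_pow, Real.sq_sqrt hs.le]
  refine ⟨⟨(√s)⁻¹ • w, ?_⟩, ?_⟩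
  · simp only [Pi.smul_apply, smul_eq_mul, mul_pow, ← mul_sum, hinv]
    exact inv_mul_cancel₀ hs.ne'
  · rw [sum_sq_vecMul_smul, hinv, Real.sq_sqrt (by positivity), mul_inv_cancel_left₀ hs.ne']

variable [Fintype κ]

lemma sMaxOn_nonneg : 0 ≤ sMaxOn V I :=
  Real.iSup_nonneg fun _ => Real.sqrt_nonneg _

lemma sMinOn_nonneg : 0 ≤ sMinOn V I :=
  Real.iInf_nonneg fun _ => Real.sqrt_nonneg _

lemma sum_sq_vecMul_le_sMaxOn (w : ι → ℝ) :
    ∑ t ∈ I, (w ᵥ* V) t ^ 2 ≤ (∑ i, w i ^ 2) * sMaxOn V I ^ 2 := by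
  rcases eq_or_ne w 0 with rfl | hw
  · simp
  obtain ⟨u, hu⟩ := exists_unit_sum_sq_vecMul_eq V I hw
  rw [hu]
  gcongr
  exact le_ciSup (bddAbove_range_sqrt_sum_sq_vecMul V I) u

lemma sMinOn_le_sum_sq_vecMul (w : ι → ℝ) :
    (∑ i, w i ^ 2) * sMinOn V I ^ 2 ≤ ∑ t ∈ I, (w ᵥ* V) t ^ 2 := by
  rcases eq_or_ne w 0 with rfl | hw
  · simp
  obtain ⟨u, hu⟩ := exists_unit_sum_sq_vecMul_eq V I hw
  rw [hu]
  have := sMinOn_nonneg V I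
  gcongr
  exact ciInf_le ⟨0, by rintro _ ⟨v, rfl⟩; exact Real.sqrt_nonneg _⟩ u

end SingularValues

section ColumnNorms

variable {ι κ ρ : Type*} [Fintype ι] [Fintype ρ]
  (M : Matrix ρ ι ℝ) (V : Matrix ι κ ℝ) (I : Finset κ)

lemma sum_sq_nrm2_col_mul :
    ∑ t ∈ I, nrm2 (fun r => (M * V) r t) ^ 2 = ∑ r, ∑ t ∈ I, (M r ᵥ* V) t ^ 2 := by
  rw [sum_comm]
  exact sum_congr rfl fun t _ => Real.sq_sqrt (sum_nonneg fun r _ => sq_nonneg _)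

variable [Fintype κ]

lemma sq_sum_nrm2_col_mul_le :
    (∑ t ∈ I, nrm2 (fun r => (M * V) r t)) ^ 2 ≤
      I.card * sMaxOn V I ^ 2 * ∑ r, ∑ i, M r i ^ 2 := by
  calc (∑ t ∈ I, nrm2 (fun r => (M * V) r t)) ^ 2
      ≤ I.card * ∑ t ∈ I, nrm2 (fun r => (M * V) r t) ^ 2 := sq_sum_le_card_mul_sum_sq
    _ ≤ I.card * ∑ r, (∑ i, M r i ^ 2) * sMaxOn V I ^ 2 := by
      rw [sum_sq_nrm2_col_mul]
      gcongr with r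
      exact sum_sq_vecMul_le_sMaxOn V I (M r)
    _ = I.card * sMaxOn V I ^ 2 * ∑ r, ∑ i, M r i ^ 2 := by rw [← sum_mul]; ring

lemma sMinOn_sq_mul_le_sq_sum_nrm2_col_mul :
    sMinOn V I ^ 2 * ∑ r, ∑ i, M r i ^ 2 ≤ (∑ t ∈ I, nrm2 (fun r => (M * V) r t)) ^ 2 := by
  calc sMinOn V I ^ 2 * ∑ r, ∑ i, M r i ^ 2
      = ∑ r, (∑ i, M r i ^ 2) * sMinOn V I ^ 2 := by rw [mul_comm, sum_mul]
    _ ≤ ∑ t ∈ I, nrm2 (fun r => (M * V) r t) ^ 2 := by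
      rw [sum_sq_nrm2_col_mul]
      gcongr with r
      exact sMinOn_le_sum_sq_vecMul V I (M r)
    _ ≤ (∑ t ∈ I, nrm2 (fun r => (M * V) r t)) ^ 2 :=
      sum_sq_le_sq_sum_of_nonneg fun _ _ => Real.sqrt_nonneg _

end ColumnNorms

theorem stmt5_general {n m T : ℕ} (V : Matrix (Fin (n + m)) (Fin T) ℝ)
    (S : Finset (Fin T)) (c : ℝ)
    (h : Real.sqrt S.card * sMaxOn V S < c * sMinOn V Sᶜ) :
    ∀ M : Matrix (Fin n) (Fin (n + m)) ℝ, M ≠ 0 →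
      ∑ t ∈ S, nrm2 (fun i => (M * V) i t) <
        c * ∑ t ∈ Sᶜ, nrm2 (fun i => (M * V) i t) := by
  intro M hM
  have hlhs : 0 ≤ √(S.card : ℝ) * sMaxOn V S := by have := sMaxOn_nonneg V S; positivity
  have hc : 0 < c := pos_of_mul_pos_left (hlhs.trans_lt h) (sMinOn_nonneg V Sᶜ)
  have hsq : S.card * sMaxOn V S ^ 2 < c ^ 2 * sMinOn V Sᶜ ^ 2 := by
    simpa [mul_pow, Real.sq_sqrt] using pow_lt_pow_left₀ h hlhs two_ne_zero
  have hrhs : 0 ≤ c * ∑ t ∈ Sᶜ, nrm2 (fun i => (M * V) i t) :=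
    mul_nonneg hc.le (sum_nonneg fun _ _ => Real.sqrt_nonneg _)
  refine lt_of_pow_lt_pow_left₀ 2 hrhs ?_
  calc (∑ t ∈ S, nrm2 (fun i => (M * V) i t)) ^ 2
      ≤ S.card * sMaxOn V S ^ 2 * ∑ r, ∑ i, M r i ^ 2 := sq_sum_nrm2_col_mul_le M V S
    _ < c ^ 2 * sMinOn V Sᶜ ^ 2 * ∑ r, ∑ i, M r i ^ 2 :=
      mul_lt_mul_of_pos_right hsq (sum_sum_sq_pos_of_ne_zero hM)
    _ ≤ c ^ 2 * (∑ t ∈ Sᶜ, nrm2 (fun i => (M * V) i t)) ^ 2 := by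
      rw [mul_assoc]
      gcongr
      exact sMinOn_sq_mul_le_sq_sum_nrm2_col_mul M V Sᶜ
    _ = (c * ∑ t ∈ Sᶜ, nrm2 (fun i => (M * V) i t)) ^ 2 := by ring

/-- Singular value sufficient condition for NSP.  If `T ≥ m + n`,
`|Sᶜ| ≥ m + n`, and `√|S| · σ_max([X;U]_S) < c · σ_min([X;U]_{Sᶜ})`, then for every
nonzero `M = [A, B]` one has `‖M [X;U]_S‖_{2,col} < c · ‖M [X;U]_{Sᶜ}‖_{2,col}`.
Here `V : ℝ^{(n+m) × T}` stands for the stacked matrix `[X; U]`. -/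
theorem stmt5 {n m T : ℕ} (V : Matrix (Fin (n + m)) (Fin T) ℝ)
    (S : Finset (Fin T)) (c : ℝ)
    (hT : m + n ≤ T) (hSc : m + n ≤ Sᶜ.card)
    (h : Real.sqrt S.card * sMaxOn V S < c * sMinOn V Sᶜ) :
    ∀ M : Matrix (Fin n) (Fin (n + m)) ℝ, M ≠ 0 →
      ∑ t ∈ S, nrm2 (fun i => (M * V) i t) <
        c * ∑ t ∈ Sᶜ, nrm2 (fun i => (M * V) i t) :=
  stmt5_general V S c h
end

section
/- If the stacked matrix V = [X; U] ∈ ℝ^{(n+m)×T} has full row rank and is s-self-decomposable with s = |S|, then for every c > ξ_s(V) and every nonzero M ∈ ℝ^{n×(n+m)}, ‖M V_S‖_{2,col} < c · ‖M V_{S^c}‖_{2,col} (i.e., V satisfies (c, S)-NSP). -/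
/-- `V` is `s`-self-decomposable: for every index set `I` of size `s`, each column of `V`
indexed by `I` lies in the span of the columns outside `I`. -/
def SelfDecomp {ι : Type*} [Fintype ι] {T : ℕ} (V : Matrix ι (Fin T) ℝ) (s : ℕ) : Prop :=
  ∀ I : Finset (Fin T), I.card = s → ∀ i ∈ I, ∃ γ : Fin T → ℝ,
    (∀ j ∈ I, γ j = 0) ∧ (∀ a, V a i = ∑ j, γ j * V a j)

/-- The `s`-self-decomposable amplitude `ξ_s(V)`: the max over index sets `I` of size `s`
of the minimal value of `∑_{k ∈ I} ‖γ_k‖_∞` over decompositions `V_I = V_{∉I} Γ_I`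
(encoded by coefficient families `Γ` vanishing on `I`). -/
noncomputable def xi {ι : Type*} [Fintype ι] {T : ℕ} (V : Matrix ι (Fin T) ℝ) (s : ℕ) : ℝ :=
  ⨆ I : {I : Finset (Fin T) // I.card = s},
    sInf {c : ℝ | ∃ Γ : Fin T → Fin T → ℝ,
      (∀ k ∈ I.1, ∀ j ∈ I.1, Γ k j = 0) ∧
      (∀ k ∈ I.1, ∀ a, V a k = ∑ j, Γ k j * V a j) ∧
      c = ∑ k ∈ I.1, ⨆ j, |Γ k j|}

lemma nrm2_eq_norm {ι : Type*} [Fintype ι] (v : ι → ℝ) :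
    nrm2 v = ‖(WithLp.equiv 2 (ι → ℝ)).symm v‖ := by
  rw [EuclideanSpace.norm_eq, nrm2]
  congr 1
  refine Finset.sum_congr rfl fun j _ => ?_
  rw [show ((WithLp.equiv 2 (ι → ℝ)).symm v).ofLp j = v j from rfl, Real.norm_eq_abs, sq_abs]

/-- If the stacked matrix `V = [X; U]` has full row rank and is
`|S|`-self-decomposable, then for every `c > ξ_{|S|}(V)` and every nonzero `M`,
`‖M V_S‖_{2,col} < c · ‖M V_{Sᶜ}‖_{2,col}`, i.e. `V` satisfies `(c, S)`-NSP. -/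
theorem stmt6 {n m T : ℕ} (V : Matrix (Fin (n + m)) (Fin T) ℝ) (S : Finset (Fin T))
    (hrank : ∀ w : Fin (n + m) → ℝ, Matrix.vecMul w V = 0 → w = 0)
    (hdec : SelfDecomp V S.card) (c : ℝ) (hc : xi V S.card < c) :
    ∀ M : Matrix (Fin n) (Fin (n + m)) ℝ, M ≠ 0 →
      ∑ t ∈ S, nrm2 (fun i => (M * V) i t) <
        c * ∑ t ∈ Sᶜ, nrm2 (fun i => (M * V) i t) := by
  intro M hM
  -- The set of achievable amplitudes for the index set `S`.
  set A : Set ℝ := {c : ℝ | ∃ Γ : Fin T → Fin T → ℝ,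
      (∀ k ∈ S, ∀ j ∈ S, Γ k j = 0) ∧
      (∀ k ∈ S, ∀ a, V a k = ∑ j, Γ k j * V a j) ∧
      c = ∑ k ∈ S, ⨆ j, |Γ k j|} with hA
  -- A is nonempty
  have hAne : A.Nonempty := by
    classical
    refine ⟨∑ k ∈ S, ⨆ j, |(if h : k ∈ S then (hdec S rfl k h).choose else 0) j|,
      fun k => if h : k ∈ S then (hdec S rfl k h).choose else 0, ?_, ?_, rfl⟩
    · intro k hk j hj
      simp only [dif_pos hk]
      exact ((hdec S rfl k hk).choose_spec).1 j hj
    · intro k hk a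
      simp only [dif_pos hk]
      exact ((hdec S rfl k hk).choose_spec).2 a
  -- A is bounded below by 0
  have hAbdd : BddBelow A := by
    refine ⟨0, fun x hx => ?_⟩
    obtain ⟨Γ, -, -, rfl⟩ := hx
    exact Finset.sum_nonneg fun k _ => Real.iSup_nonneg fun j => abs_nonneg _
  -- sInf A ≤ xi
  have hle : sInf A ≤ xi V S.card := by
    unfold xi
    exact le_ciSup (f := fun I : {I : Finset (Fin T) // I.card = S.card} =>
        sInf {c : ℝ | ∃ Γ : Fin T → Fin T → ℝ,
          (∀ k ∈ I.1, ∀ j ∈ I.1, Γ k j = 0) ∧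
          (∀ k ∈ I.1, ∀ a, V a k = ∑ j, Γ k j * V a j) ∧
          c = ∑ k ∈ I.1, ⨆ j, |Γ k j|})
      (Set.Finite.bddAbove (Set.finite_range _)) ⟨S, rfl⟩
  have hlt : sInf A < c := lt_of_le_of_lt hle hc
  obtain ⟨σ, hσA, hσc⟩ := (csInf_lt_iff hAbdd hAne).mp hlt
  obtain ⟨Γ, hΓ0, hΓdec, rfl⟩ := hσA
  -- columns of M * V as Euclidean vectors
  set f : Fin T → EuclideanSpace ℝ (Fin n) :=
    fun t => (WithLp.equiv 2 (Fin n → ℝ)).symm (fun i => (M * V) i t) with hf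
  have hn : ∀ t, nrm2 (fun i => (M * V) i t) = ‖f t‖ := fun t => nrm2_eq_norm _
  -- column decomposition at the matrix level
  have hcol : ∀ k ∈ S, ∀ i, (M * V) i k = ∑ j ∈ Sᶜ, Γ k j * (M * V) i j := by
    intro k hk i
    have h1 : (M * V) i k = ∑ j, Γ k j * (M * V) i j := by
      simp only [Matrix.mul_apply]
      calc ∑ a, M i a * V a k = ∑ a, M i a * ∑ j, Γ k j * V a j := by
            refine Finset.sum_congr rfl fun a _ => by rw [← hΓdec k hk a]
        _ = ∑ a, ∑ j, Γ k j * (M i a * V a j) := by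
            refine Finset.sum_congr rfl fun a _ => ?_
            rw [Finset.mul_sum]; refine Finset.sum_congr rfl fun j _ => by ring
        _ = ∑ j, Γ k j * ∑ a, M i a * V a j := by
            rw [Finset.sum_comm]
            refine Finset.sum_congr rfl fun j _ => by rw [Finset.mul_sum]
    rw [h1]
    refine (Finset.sum_subset (Finset.subset_univ Sᶜ) ?_).symm
    intro j _ hj
    rw [hΓ0 k hk j (by simpa using hj), zero_mul]
  -- decomposition for Euclidean vectors
  have hfcol : ∀ k ∈ S, f k = ∑ j ∈ Sᶜ, Γ k j • f j := by
    intro k hk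
    have : (fun i => (M * V) i k) = ∑ j ∈ Sᶜ, Γ k j • (fun i => (M * V) i j) := by
      funext i
      rw [Finset.sum_apply]
      simpa using hcol k hk i
    calc f k = (WithLp.linearEquiv 2 ℝ (Fin n → ℝ)).symm (fun i => (M * V) i k) := rfl
      _ = ∑ j ∈ Sᶜ, Γ k j • f j := by
          rw [this, map_sum]
          refine Finset.sum_congr rfl fun j _ => ?_
          rw [map_smul]; rfl
  set B : ℝ := ∑ t ∈ Sᶜ, ‖f t‖ with hB
  -- per-column bound
  have hbound : ∀ k ∈ S, ‖f k‖ ≤ (⨆ j, |Γ k j|) * B := by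
    intro k hk
    rw [hfcol k hk]
    calc ‖∑ j ∈ Sᶜ, Γ k j • f j‖ ≤ ∑ j ∈ Sᶜ, ‖Γ k j • f j‖ := norm_sum_le _ _
      _ = ∑ j ∈ Sᶜ, |Γ k j| * ‖f j‖ := by
          refine Finset.sum_congr rfl fun j _ => by rw [norm_smul, Real.norm_eq_abs]
      _ ≤ ∑ j ∈ Sᶜ, (⨆ j', |Γ k j'|) * ‖f j‖ := by
          refine Finset.sum_le_sum fun j _ => ?_
          exact mul_le_mul_of_nonneg_right
            (le_ciSup (f := fun j' => |Γ k j'|) (Set.Finite.bddAbove (Set.finite_range _)) j) (norm_nonneg _)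
      _ = (⨆ j, |Γ k j|) * B := by rw [← Finset.mul_sum]
  -- B > 0
  have hB0 : 0 < B := by
    rcases lt_or_eq_of_le (Finset.sum_nonneg fun t _ => norm_nonneg (f t)) with h | h
    · exact h
    · exfalso
      have hzero : ∀ t ∈ Sᶜ, f t = 0 := by
        intro t ht
        have := (Finset.sum_eq_zero_iff_of_nonneg fun t _ => norm_nonneg (f t)).mp h.symm t ht
        exact norm_eq_zero.mp this
      have hMV : M * V = 0 := by
        ext i t
        by_cases ht : t ∈ S
        · rw [hcol t ht i]
          refine Finset.sum_eq_zero fun j hj => ?_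
          have : (M * V) i j = 0 := by
            have := hzero j hj
            have h2 : (fun i' => (M * V) i' j) = 0 := congrArg WithLp.ofLp this
            exact congrFun h2 i
          rw [this, mul_zero]
        · have := hzero t (Finset.mem_compl.mpr ht)
          have h2 : (fun i' => (M * V) i' t) = 0 := congrArg WithLp.ofLp this
          simpa using congrFun h2 i
      apply hM
      ext i a
      have hrow : Matrix.vecMul (M i) V = 0 := by
        funext t
        have : (M * V) i t = 0 := by rw [hMV]; rfl
        simpa [Matrix.vecMul, dotProduct, Matrix.mul_apply] using this
      have := hrank (M i) hrow
      simpa using congrFun this a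
  -- conclude
  calc ∑ t ∈ S, nrm2 (fun i => (M * V) i t) = ∑ t ∈ S, ‖f t‖ := by
        exact Finset.sum_congr rfl fun t _ => hn t
    _ ≤ ∑ k ∈ S, (⨆ j, |Γ k j|) * B := Finset.sum_le_sum hbound
    _ = (∑ k ∈ S, ⨆ j, |Γ k j|) * B := by rw [Finset.sum_mul]
    _ < c * B := mul_lt_mul_of_pos_right hσc hB0
    _ = c * ∑ t ∈ Sᶜ, nrm2 (fun i => (M * V) i t) := by
        rw [hB]; congr 1; exact Finset.sum_congr rfl fun t _ => (hn t).symm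
end
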